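/- The supremum over x ∈ ℝ and y ∈ ℝ of u(x, y) = (1/(2π)) ∫_x^∞ K₀(√(ξ² + y²)·√(1 + v²/4)) exp(-(v/2)ξ) dξ is 1/2, attained in the limit x → -∞, y = 0; in particular u(x, y) < 1/2 for all (x, y). -/

import Mathlib

open Real Filter Set MeasureTheory

/-- Modified Bessel function of the second kind of order 0. -/
noncomputable def K0 (r : ℝ) : ℝ := ∫ t in Ioi (0 : ℝ), Real.exp (-r * Real.cosh t)

/-- The travelling front profile. -/
noncomputable def frontProfile (v x y : ℝ) : ℝ :=
  (1 / (2 * π)) *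
    ∫ ξ in Ioi x,
      K0 (Real.sqrt (ξ ^ 2 + y ^ 2) * Real.sqrt (1 + v ^ 2 / 4)) *
        Real.exp (-(v / 2) * ξ)

/-!
Write `a = √(1 + v²/4)` and `b = v/2`, so that `a² = 1 + b²`. Inserting the integral defining `K₀`
and integrating first in `ξ` gives, by Fubini,
`∫_ℝ K₀(a|ξ|) e^{-bξ} dξ = ∫_0^∞ 2a cosh t / (a² cosh² t - b²) dt = ∫_0^∞ 2a cosh t / (1 + a² sinh² t) dt`,
and the last integrand is the derivative of `2 arctan (a sinh t)`, so the total mass is `π`.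
Hence `u(x, 0) = (1/2π) ∫_x^∞ K₀(a|ξ|) e^{-bξ} dξ` increases to `1/2` as `x → -∞`, strictly below
`1/2` because the kernel is positive off `0`; and since `K₀` is decreasing, `u(x, y) ≤ u(x, 0)`.
-/

open Topology

section ExponentialIntegrals

variable {b c : ℝ}

lemma exp_neg_mul_abs_add_mul_of_nonpos {ξ : ℝ} (hξ : ξ ≤ 0) :
    exp (-(c * |ξ| + b * ξ)) = exp ((c - b) * ξ) := by
  rw [abs_of_nonpos hξ]; ring_nf

lemma exp_neg_mul_abs_add_mul_of_nonneg {ξ : ℝ} (hξ : 0 ≤ ξ) :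
    exp (-(c * |ξ| + b * ξ)) = exp (-(c + b) * ξ) := by
  rw [abs_of_nonneg hξ]; ring_nf

theorem integrable_exp_neg_mul_abs_add_mul (h : |b| < c) :
    Integrable (fun ξ : ℝ => exp (-(c * |ξ| + b * ξ))) := by
  obtain ⟨h₁, h₂⟩ := abs_lt.1 h
  have hIic : IntegrableOn (fun ξ : ℝ => exp (-(c * |ξ| + b * ξ))) (Iic 0) :=
    (integrableOn_exp_mul_Iic (by linarith) 0).congr_fun
      (fun _ hξ => (exp_neg_mul_abs_add_mul_of_nonpos hξ).symm) measurableSet_Iic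
  have hIoi : IntegrableOn (fun ξ : ℝ => exp (-(c * |ξ| + b * ξ))) (Ioi 0) :=
    (integrableOn_exp_mul_Ioi (by linarith) 0).congr_fun
      (fun _ hξ => (exp_neg_mul_abs_add_mul_of_nonneg (le_of_lt hξ)).symm) measurableSet_Ioi
  simpa using hIic.union hIoi

theorem integral_exp_neg_mul_abs_add_mul (h : |b| < c) :
    ∫ ξ : ℝ, exp (-(c * |ξ| + b * ξ)) = 2 * c / (c ^ 2 - b ^ 2) := by
  obtain ⟨h₁, h₂⟩ := abs_lt.1 h
  have hint := integrable_exp_neg_mul_abs_add_mul h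
  rw [← intervalIntegral.integral_Iic_add_Ioi hint.integrableOn hint.integrableOn,
    setIntegral_congr_fun measurableSet_Iic fun _ hξ => exp_neg_mul_abs_add_mul_of_nonpos hξ,
    setIntegral_congr_fun measurableSet_Ioi
      fun _ hξ => exp_neg_mul_abs_add_mul_of_nonneg (le_of_lt hξ),
    integral_exp_mul_Iic (by linarith), integral_exp_mul_Ioi (by linarith)]
  have : c - b ≠ 0 := by linarith
  have : c + b ≠ 0 := by linarith
  have : c ^ 2 - b ^ 2 ≠ 0 := by nlinarith
  simp only [mul_zero, exp_zero]
  field_simp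
  ring

end ExponentialIntegrals

section ArctanSinh

theorem hasDerivAt_two_mul_arctan_mul_sinh (a t : ℝ) :
    HasDerivAt (fun t => 2 * arctan (a * sinh t)) (2 * a * cosh t / (1 + (a * sinh t) ^ 2)) t :=
  ((((hasDerivAt_sinh t).const_mul a).arctan).const_mul 2).congr_deriv (by ring)

variable {a : ℝ}

theorem tendsto_two_mul_arctan_mul_sinh (ha : 0 < a) :
    Tendsto (fun t => 2 * arctan (a * sinh t)) atTop (𝓝 π) := by
  have h := (tendsto_arctan_atTop.mono_right nhdsWithin_le_nhds).comp
    (sinhOrderIso.tendsto_atTop.const_mul_atTop ha)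
  simpa [mul_div_cancel₀] using h.const_mul 2

lemma two_mul_cosh_div_nonneg (ha : 0 ≤ a) (t : ℝ) :
    0 ≤ 2 * a * cosh t / (1 + (a * sinh t) ^ 2) := by
  have := cosh_pos t
  positivity

theorem integrableOn_two_mul_cosh_div (ha : 0 < a) :
    IntegrableOn (fun t => 2 * a * cosh t / (1 + (a * sinh t) ^ 2)) (Ioi 0) :=
  integrableOn_Ioi_deriv_of_nonneg' (fun t _ => hasDerivAt_two_mul_arctan_mul_sinh a t)
    (fun t _ => two_mul_cosh_div_nonneg ha.le t) (tendsto_two_mul_arctan_mul_sinh ha)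

theorem integral_two_mul_cosh_div (ha : 0 < a) :
    ∫ t in Ioi 0, 2 * a * cosh t / (1 + (a * sinh t) ^ 2) = π := by
  rw [integral_Ioi_of_hasDerivAt_of_nonneg' (fun t _ => hasDerivAt_two_mul_arctan_mul_sinh a t)
    (fun t _ => two_mul_cosh_div_nonneg ha.le t) (tendsto_two_mul_arctan_mul_sinh ha)]
  simp

end ArctanSinh

section BesselK0

variable {r : ℝ}

lemma K0_nonneg (r : ℝ) : 0 ≤ K0 r :=
  integral_nonneg fun _ => (exp_pos _).le

theorem integrableOn_exp_neg_mul_cosh (hr : 0 < r) :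
    IntegrableOn (fun t => exp (-r * cosh t)) (Ioi 0) := by
  refine (integrableOn_exp_mul_Ioi (neg_lt_zero.2 hr) 0).mono'
    (by fun_prop : Continuous fun t => exp (-r * cosh t)).aestronglyMeasurable ?_
  filter_upwards [ae_restrict_mem measurableSet_Ioi] with t ht
  have : t ≤ cosh t := (self_le_sinh_iff.2 (le_of_lt ht)).trans (sinh_lt_cosh t).le
  rw [norm_of_nonneg (exp_pos _).le]
  exact exp_le_exp.2 (by nlinarith)

theorem K0_pos (hr : 0 < r) : 0 < K0 r := by
  rw [K0, setIntegral_pos_iff_support_of_nonneg_ae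
    (Eventually.of_forall fun _ => (exp_pos _).le) (integrableOn_exp_neg_mul_cosh hr)]
  simp [Function.support, exp_ne_zero]

theorem antitoneOn_K0 : AntitoneOn K0 (Ioi 0) := fun r hr s _ hrs =>
  integral_mono_of_nonneg (Eventually.of_forall fun _ => (exp_pos _).le)
    (integrableOn_exp_neg_mul_cosh hr)
    (Eventually.of_forall fun t => exp_le_exp.2 (by nlinarith [cosh_pos t]))

end BesselK0

section KernelMass

variable {a b : ℝ}

lemma abs_lt_mul_cosh (ha : 0 < a) (hab : a ^ 2 = 1 + b ^ 2) (t : ℝ) : |b| < a * cosh t := by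
  have hb : |b| < a := abs_lt_of_sq_lt_sq (by linarith) ha.le
  nlinarith [one_le_cosh t]

lemma integral_exp_neg_mul_cosh_mul_abs (ha : 0 < a) (hab : a ^ 2 = 1 + b ^ 2) (t : ℝ) :
    ∫ ξ : ℝ, exp (-(a * cosh t * |ξ| + b * ξ)) = 2 * a * cosh t / (1 + (a * sinh t) ^ 2) := by
  rw [integral_exp_neg_mul_abs_add_mul (abs_lt_mul_cosh ha hab t), mul_assoc]
  congr 1
  linear_combination a ^ 2 * cosh_sq_sub_sinh_sq t + hab

lemma K0_mul_exp_eq_integral (a b ξ : ℝ) :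
    K0 (|ξ| * a) * exp (-b * ξ) = ∫ t in Ioi 0, exp (-(a * cosh t * |ξ| + b * ξ)) := by
  rw [K0, ← integral_mul_const]
  congr 1 with t
  rw [← exp_add]
  ring_nf

theorem integrable_exp_neg_mul_cosh_mul_abs_prod (ha : 0 < a) (hab : a ^ 2 = 1 + b ^ 2) :
    Integrable (Function.uncurry fun t ξ : ℝ => exp (-(a * cosh t * |ξ| + b * ξ)))
      ((volume.restrict (Ioi 0)).prod volume) := by
  refine (integrable_prod_iff (by fun_prop : Continuous _).aestronglyMeasurable).2
    ⟨Eventually.of_forall fun t => integrable_exp_neg_mul_abs_add_mul (abs_lt_mul_cosh ha hab t),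
      (integrableOn_two_mul_cosh_div ha).congr (Eventually.of_forall fun t => ?_)⟩
  simp only [Function.uncurry_apply_pair, norm_of_nonneg (exp_pos _).le]
  exact (integral_exp_neg_mul_cosh_mul_abs ha hab t).symm

theorem integrable_K0_mul_exp (ha : 0 < a) (hab : a ^ 2 = 1 + b ^ 2) :
    Integrable fun ξ => K0 (|ξ| * a) * exp (-b * ξ) := by
  simpa only [K0_mul_exp_eq_integral, Function.uncurry_apply_pair] using
    (integrable_exp_neg_mul_cosh_mul_abs_prod ha hab).integral_prod_right

theorem integral_K0_mul_exp (ha : 0 < a) (hab : a ^ 2 = 1 + b ^ 2) :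
    ∫ ξ, K0 (|ξ| * a) * exp (-b * ξ) = π := by
  simp only [K0_mul_exp_eq_integral]
  rw [← integral_integral_swap (integrable_exp_neg_mul_cosh_mul_abs_prod ha hab)]
  simp only [integral_exp_neg_mul_cosh_mul_abs ha hab]
  exact integral_two_mul_cosh_div ha

end KernelMass

section FrontProfile

variable (v : ℝ)

noncomputable def frontKernel (ξ : ℝ) : ℝ :=
  K0 (|ξ| * √(1 + v ^ 2 / 4)) * exp (-(v / 2) * ξ)

lemma sqrt_one_add_sq_div_four_pos : 0 < √(1 + v ^ 2 / 4) :=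
  sqrt_pos.2 (by positivity)

lemma sq_sqrt_one_add_sq_div_four : √(1 + v ^ 2 / 4) ^ 2 = 1 + (v / 2) ^ 2 := by
  rw [sq_sqrt (by positivity)]
  ring

theorem integrable_frontKernel : Integrable (frontKernel v) :=
  integrable_K0_mul_exp (sqrt_one_add_sq_div_four_pos v) (sq_sqrt_one_add_sq_div_four v)

theorem integral_frontKernel : ∫ ξ, frontKernel v ξ = π :=
  integral_K0_mul_exp (sqrt_one_add_sq_div_four_pos v) (sq_sqrt_one_add_sq_div_four v)

lemma frontKernel_nonneg (ξ : ℝ) : 0 ≤ frontKernel v ξ :=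
  mul_nonneg (K0_nonneg _) (exp_pos _).le

lemma frontKernel_pos {ξ : ℝ} (hξ : ξ ≠ 0) : 0 < frontKernel v ξ :=
  mul_pos (K0_pos (mul_pos (abs_pos.2 hξ) (sqrt_one_add_sq_div_four_pos v))) (exp_pos _)

theorem frontProfile_zero (x : ℝ) :
    frontProfile v x 0 = 1 / (2 * π) * ∫ ξ in Ioi x, frontKernel v ξ := by
  simp [frontProfile, frontKernel, sqrt_sq_eq_abs]

theorem frontProfile_le_frontProfile_zero (x y : ℝ) : frontProfile v x y ≤ frontProfile v x 0 := by
  rw [frontProfile_zero, frontProfile]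
  refine mul_le_mul_of_nonneg_left (integral_mono_of_nonneg
    (Eventually.of_forall fun ξ => mul_nonneg (K0_nonneg _) (exp_pos _).le)
    (integrable_frontKernel v).integrableOn ?_) (by positivity)
  filter_upwards [ae_restrict_of_ae (Measure.ae_ne volume 0)] with ξ hξ
  have hA := sqrt_one_add_sq_div_four_pos v
  have habs : |ξ| ≤ √(ξ ^ 2 + y ^ 2) := sqrt_sq_eq_abs ξ ▸ sqrt_le_sqrt (by nlinarith)
  have hξA : 0 < |ξ| * √(1 + v ^ 2 / 4) := mul_pos (abs_pos.2 hξ) hA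
  have hle := mul_le_mul_of_nonneg_right habs hA.le
  exact mul_le_mul_of_nonneg_right (antitoneOn_K0 hξA (hξA.trans_le hle) hle) (exp_pos _).le

theorem integral_Iic_frontKernel_pos (x : ℝ) : 0 < ∫ ξ in Iic x, frontKernel v ξ := by
  rw [setIntegral_pos_iff_support_of_nonneg_ae (Eventually.of_forall (frontKernel_nonneg v))
    (integrable_frontKernel v).integrableOn]
  have hsub : Iio (min x 0) ⊆ Function.support (frontKernel v) ∩ Iic x := fun ξ hξ => by
    obtain ⟨hξx, hξ0⟩ := lt_min_iff.1 (mem_Iio.1 hξ)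
    exact ⟨(frontKernel_pos v hξ0.ne).ne', hξx.le⟩
  exact (measure_mono hsub).trans_lt' (by simp)

theorem frontProfile_zero_eq_half_sub (x : ℝ) :
    frontProfile v x 0 = 1 / 2 - 1 / (2 * π) * ∫ ξ in Iic x, frontKernel v ξ := by
  have hsplit := intervalIntegral.integral_Iic_add_Ioi (b := x)
    (integrable_frontKernel v).integrableOn (integrable_frontKernel v).integrableOn
  rw [integral_frontKernel] at hsplit
  rw [frontProfile_zero, eq_sub_iff_add_eq, ← mul_add, add_comm, hsplit]
  field_simp

theorem frontProfile_zero_lt_half (x : ℝ) : frontProfile v x 0 < 1 / 2 := by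
  rw [frontProfile_zero_eq_half_sub]
  have := mul_pos (one_div_pos.2 (by positivity : 0 < 2 * π)) (integral_Iic_frontKernel_pos v x)
  linarith

theorem tendsto_frontProfile_zero_atBot :
    Tendsto (fun x => frontProfile v x 0) atBot (𝓝 (1 / 2)) := by
  have h := ((tendsto_integral_Iic_zero (f := frontKernel v) (μ := volume) tendsto_id).const_mul
    (1 / (2 * π))).const_sub (1 / 2)
  rw [mul_zero, sub_zero] at h
  exact h.congr fun x => (frontProfile_zero_eq_half_sub v x).symm

end FrontProfile

theorem stmt_12 (v : ℝ) :
    (∀ x y : ℝ, frontProfile v x y < 1 / 2) ∧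
    IsLUB {z : ℝ | ∃ x y : ℝ, frontProfile v x y = z} (1 / 2) ∧
    Tendsto (fun x : ℝ => frontProfile v x 0) atBot (nhds (1 / 2)) := by
  have hlt : ∀ x y, frontProfile v x y < 1 / 2 := fun x y =>
    (frontProfile_le_frontProfile_zero v x y).trans_lt (frontProfile_zero_lt_half v x)
  have htend := tendsto_frontProfile_zero_atBot v
  refine ⟨hlt, ⟨?_, fun c hc => ?_⟩, htend⟩
  · rintro _ ⟨x, y, rfl⟩
    exact (hlt x y).le
  · exact le_of_tendsto htend (Eventually.of_forall fun x => hc ⟨x, 0, rfl⟩)
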